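/- Let a ≥ 1 and let L:(0,∞)→[0,∞) be measurable with L(t) ≤ M for all t > 0 and 0 < ∫₀^∞ t^{-a-1} L(t) dt < ∞. Then there exist a constant K₂ ∈ (0,∞) and τ₀ ∈ (0,1) such that for all τ ∈ (0,τ₀) and all x ∈ ℝ, m_a(x,τ) ≤ K₂ · exp(x²/2) · τ² · log(1/τ). -/

import Mathlib

open MeasureTheory Filter Set

/-- Posterior mean of 1 − κ under the one-group prior. -/
noncomputable def mA (a : ℝ) (L : ℝ → ℝ) (x τ : ℝ) : ℝ :=
  (τ ^ 2 * ∫ t in Set.Ioi (0:ℝ),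
      (1 + t * τ ^ 2) ^ (-(3:ℝ) / 2) * t ^ (-a) * L t *
        Real.exp (x ^ 2 / 2 * (t * τ ^ 2 / (1 + t * τ ^ 2)))) /
  (∫ t in Set.Ioi (0:ℝ),
      (1 + t * τ ^ 2) ^ (-(1:ℝ) / 2) * t ^ (-(a + 1)) * L t *
        Real.exp (x ^ 2 / 2 * (t * τ ^ 2 / (1 + t * τ ^ 2))))

open Topology

/-! Write `ε = τ²`. The likelihood factor `exp ((x²/2) · tε/(1+tε))` lies between `1` and
`exp (x²/2)`, so it can be dropped from the denominator and bounded by `exp (x²/2)` in the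
numerator. By dominated convergence the remaining denominator `∫ (1+tε)^(-1/2) t^(-a-1) L(t) dt`
tends to `I = ∫ t^(-a-1) L(t) dt > 0` as `ε → 0`, so it exceeds `I/2` for small `τ`. In the
numerator the kernel `(1+tε)^(-3/2) t^(-a)` is at most `t^(-a-1)` on `(0,1]` and, as `a ≥ 1`, at
most `1/(t(1+εt))` on `(1,∞)`; the latter integrates to `log (1+ε) - log ε ≤ 1 + 2 log (1/τ)`,
which is where the factor `log (1/τ)` comes from. -/

section InvMulOneAdd

variable {ε : ℝ}

lemma hasDerivAt_neg_log_inv_add (hε : 0 < ε) {t : ℝ} (ht : 0 < t) :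
    HasDerivAt (fun y => -Real.log (y⁻¹ + ε)) (t * (1 + ε * t))⁻¹ t := by
  have hpos : 0 < t⁻¹ + ε := by positivity
  refine ((((hasDerivAt_inv ht.ne').add_const ε).log hpos.ne').neg).congr_deriv ?_
  field_simp

lemma tendsto_neg_log_inv_add_atTop (hε : 0 < ε) :
    Tendsto (fun y : ℝ => -Real.log (y⁻¹ + ε)) atTop (𝓝 (-Real.log ε)) := by
  have h := tendsto_inv_atTop_zero.add_const ε
  rw [zero_add] at h
  exact ((Real.continuousAt_log hε.ne').tendsto.comp h).neg

lemma integrableOn_Ioi_one_inv_mul_one_add_mul (hε : 0 < ε) :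
    IntegrableOn (fun t : ℝ => (t * (1 + ε * t))⁻¹) (Ioi 1) :=
  integrableOn_Ioi_deriv_of_nonneg'
    (fun t ht => hasDerivAt_neg_log_inv_add hε (zero_lt_one.trans_le ht))
    (fun t ht => by have : (0 : ℝ) < t := zero_lt_one.trans ht; positivity)
    (tendsto_neg_log_inv_add_atTop hε)

lemma integral_Ioi_one_inv_mul_one_add_mul (hε : 0 < ε) :
    ∫ t in Ioi (1 : ℝ), (t * (1 + ε * t))⁻¹ = Real.log (1 + ε) - Real.log ε := by
  rw [integral_Ioi_of_hasDerivAt_of_nonneg'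
    (fun t ht => hasDerivAt_neg_log_inv_add hε (zero_lt_one.trans_le ht))
    (fun t ht => by have : (0 : ℝ) < t := zero_lt_one.trans ht; positivity)
    (tendsto_neg_log_inv_add_atTop hε)]
  simp only [inv_one]
  ring

lemma integrableOn_indicator_Ioi_one_inv_mul_one_add_mul (hε : 0 < ε) :
    IntegrableOn ((Ioi 1).indicator fun t : ℝ => (t * (1 + ε * t))⁻¹) (Ioi 0) :=
  ((integrableOn_Ioi_one_inv_mul_one_add_mul hε).integrable_indicator
    measurableSet_Ioi).integrableOn

lemma integral_indicator_Ioi_one_inv_mul_one_add_mul (hε : 0 < ε) :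
    ∫ t in Ioi (0 : ℝ), (Ioi 1).indicator (fun t : ℝ => (t * (1 + ε * t))⁻¹) t =
      Real.log (1 + ε) - Real.log ε := by
  rw [setIntegral_indicator measurableSet_Ioi, inter_eq_right.mpr (Ioi_subset_Ioi zero_le_one),
    integral_Ioi_one_inv_mul_one_add_mul hε]

end InvMulOneAdd

lemma MeasureTheory.IntegrableOn.one_add_mul_rpow_mul {G : ℝ → ℝ} (hG : IntegrableOn G (Ioi 0))
    {ε p : ℝ} (hε : 0 ≤ ε) (hp : p ≤ 0) :
    IntegrableOn (fun t => (1 + t * ε) ^ p * G t) (Ioi 0) := by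
  refine Integrable.bdd_mul (c := 1) hG
    (by fun_prop : Measurable fun t : ℝ => (1 + t * ε) ^ p).aestronglyMeasurable ?_
  filter_upwards [ae_restrict_mem measurableSet_Ioi] with t (ht : 0 < t)
  rw [Real.norm_of_nonneg (by positivity)]
  exact Real.rpow_le_one_of_one_le_of_nonpos (by nlinarith) hp

lemma tendsto_setIntegral_one_add_mul_rpow_mul {G : ℝ → ℝ} (hG : IntegrableOn G (Ioi 0))
    {p : ℝ} (hp : p ≤ 0) :
    Tendsto (fun ε => ∫ t in Ioi (0 : ℝ), (1 + t * ε) ^ p * G t) (𝓝[≥] 0)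
      (𝓝 (∫ t in Ioi (0 : ℝ), G t)) := by
  refine tendsto_integral_filter_of_dominated_convergence (fun t => ‖G t‖) ?_ ?_ hG.norm ?_
  · exact Eventually.of_forall fun ε =>
      ((by fun_prop : Measurable fun t : ℝ => (1 + t * ε) ^ p).aestronglyMeasurable.mul hG.1)
  · filter_upwards [self_mem_nhdsWithin] with ε (hε : 0 ≤ ε)
    filter_upwards [ae_restrict_mem measurableSet_Ioi] with t (ht : 0 < t)
    rw [norm_mul, Real.norm_of_nonneg (by positivity)]
    exact mul_le_of_le_one_left (norm_nonneg _)
      (Real.rpow_le_one_of_one_le_of_nonpos (by nlinarith) hp)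
  · refine Eventually.of_forall fun t => ?_
    have h : ContinuousAt (fun ε : ℝ => (1 + t * ε) ^ p * G t) 0 :=
      ((ContinuousAt.rpow_const (by fun_prop) (Or.inl (by simp))).mul continuousAt_const)
    simpa using h.tendsto.mono_left nhdsWithin_le_nhds

/-- `mA a L x τ` is the ratio of two integrals of kernels against `likelihoodWeight x (τ ^ 2)`. -/
noncomputable def likelihoodWeight (x ε t : ℝ) : ℝ :=
  Real.exp (x ^ 2 / 2 * (t * ε / (1 + t * ε)))

section LikelihoodWeight

variable {x ε : ℝ}

lemma measurable_likelihoodWeight : Measurable (likelihoodWeight x ε) := by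
  unfold likelihoodWeight
  fun_prop

lemma one_le_likelihoodWeight (hε : 0 ≤ ε) {t : ℝ} (ht : 0 ≤ t) : 1 ≤ likelihoodWeight x ε t :=
  Real.one_le_exp (by positivity)

lemma likelihoodWeight_le (hε : 0 ≤ ε) {t : ℝ} (ht : 0 ≤ t) :
    likelihoodWeight x ε t ≤ Real.exp (x ^ 2 / 2) := by
  refine Real.exp_le_exp.mpr (mul_le_of_le_one_right (by positivity) ?_)
  exact div_le_one_of_le₀ (by linarith) (by positivity)

variable {f : ℝ → ℝ}

lemma MeasureTheory.IntegrableOn.mul_likelihoodWeight (hf : IntegrableOn f (Ioi 0))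
    (hε : 0 ≤ ε) : IntegrableOn (fun t => f t * likelihoodWeight x ε t) (Ioi 0) := by
  refine Integrable.mul_bdd (c := Real.exp (x ^ 2 / 2)) hf
    measurable_likelihoodWeight.aestronglyMeasurable ?_
  filter_upwards [ae_restrict_mem measurableSet_Ioi] with t (ht : 0 < t)
  rw [Real.norm_of_nonneg (zero_le_one.trans (one_le_likelihoodWeight hε ht.le))]
  exact likelihoodWeight_le hε ht.le

lemma setIntegral_le_setIntegral_mul_likelihoodWeight (hf : IntegrableOn f (Ioi 0))
    (hf0 : ∀ t, 0 < t → 0 ≤ f t) (hε : 0 ≤ ε) :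
    ∫ t in Ioi (0 : ℝ), f t ≤ ∫ t in Ioi (0 : ℝ), f t * likelihoodWeight x ε t :=
  setIntegral_mono_on hf (hf.mul_likelihoodWeight hε) measurableSet_Ioi fun t ht =>
    le_mul_of_one_le_right (hf0 t ht) (one_le_likelihoodWeight hε (le_of_lt ht))

lemma setIntegral_mul_likelihoodWeight_le (hf : IntegrableOn f (Ioi 0))
    (hf0 : ∀ t, 0 < t → 0 ≤ f t) (hε : 0 ≤ ε) :
    ∫ t in Ioi (0 : ℝ), f t * likelihoodWeight x ε t ≤
      Real.exp (x ^ 2 / 2) * ∫ t in Ioi (0 : ℝ), f t := by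
  rw [← integral_const_mul]
  refine setIntegral_mono_on (hf.mul_likelihoodWeight hε) (hf.const_mul _) measurableSet_Ioi
    fun t ht => ?_
  rw [mul_comm (Real.exp _)]
  exact mul_le_mul_of_nonneg_left (likelihoodWeight_le hε (le_of_lt ht)) (hf0 t ht)

end LikelihoodWeight

section Numerator

variable {a M ε : ℝ} {L : ℝ → ℝ}

lemma one_add_mul_rpow_mul_rpow_le_of_le_one (hε : 0 ≤ ε) {t : ℝ} (ht0 : 0 < t)
    (ht1 : t ≤ 1) :
    (1 + t * ε) ^ (-(3 : ℝ) / 2) * t ^ (-a) ≤ t ^ (-(a + 1)) := by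
  calc (1 + t * ε) ^ (-(3 : ℝ) / 2) * t ^ (-a) ≤ 1 * t ^ (-a) := by
        gcongr
        exact Real.rpow_le_one_of_one_le_of_nonpos (by nlinarith) (by norm_num)
    _ ≤ t ^ (-(a + 1)) := by
        rw [one_mul]
        exact Real.rpow_le_rpow_of_exponent_ge ht0 ht1 (by linarith)

lemma one_add_mul_rpow_mul_rpow_le_of_one_lt (ha : 1 ≤ a) (hε : 0 ≤ ε) {t : ℝ} (ht : 1 < t) :
    (1 + t * ε) ^ (-(3 : ℝ) / 2) * t ^ (-a) ≤ (t * (1 + ε * t))⁻¹ := by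
  have hε' : 1 ≤ 1 + t * ε := by nlinarith
  calc (1 + t * ε) ^ (-(3 : ℝ) / 2) * t ^ (-a) ≤ (1 + t * ε) ^ (-1 : ℝ) * t ^ (-1 : ℝ) := by
        refine mul_le_mul (Real.rpow_le_rpow_of_exponent_le hε' (by norm_num))
          (Real.rpow_le_rpow_of_exponent_le ht.le (by linarith)) (by positivity) (by positivity)
    _ = (t * (1 + ε * t))⁻¹ := by
        rw [Real.rpow_neg_one, Real.rpow_neg_one, mul_inv, mul_comm ε, mul_comm]

lemma one_add_mul_rpow_mul_rpow_mul_le (ha : 1 ≤ a) (hε : 0 ≤ ε) {t : ℝ} (ht : 0 < t)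
    (hL0 : 0 ≤ L t) (hLM : L t ≤ M) :
    (1 + t * ε) ^ (-(3 : ℝ) / 2) * t ^ (-a) * L t ≤
      t ^ (-(a + 1)) * L t + M * (Ioi 1).indicator (fun t => (t * (1 + ε * t))⁻¹) t := by
  rcases le_or_gt t 1 with ht1 | ht1
  · rw [indicator_of_notMem (by simpa using ht1), mul_zero, add_zero]
    exact mul_le_mul_of_nonneg_right (one_add_mul_rpow_mul_rpow_le_of_le_one hε ht ht1) hL0
  · rw [indicator_of_mem (mem_Ioi.mpr ht1)]
    have hG : 0 ≤ t ^ (-(a + 1)) * L t := by positivity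
    calc (1 + t * ε) ^ (-(3 : ℝ) / 2) * t ^ (-a) * L t ≤ (t * (1 + ε * t))⁻¹ * M := by
          gcongr
          exact one_add_mul_rpow_mul_rpow_le_of_one_lt ha hε ht1
      _ ≤ _ := by linarith

lemma integrableOn_one_add_mul_rpow_mul_rpow_mul (ha : 1 ≤ a) (hLmeas : Measurable L)
    (hLnonneg : ∀ t, 0 < t → 0 ≤ L t) (hLbound : ∀ t, 0 < t → L t ≤ M)
    (hLint : IntegrableOn (fun t => t ^ (-(a + 1)) * L t) (Ioi 0)) (hε : 0 < ε) :
    IntegrableOn (fun t => (1 + t * ε) ^ (-(3 : ℝ) / 2) * t ^ (-a) * L t) (Ioi 0) := by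
  refine Integrable.mono'
    (hLint.add ((integrableOn_indicator_Ioi_one_inv_mul_one_add_mul hε).const_mul M))
    (by fun_prop) ?_
  filter_upwards [ae_restrict_mem measurableSet_Ioi] with t (ht : 0 < t)
  rw [Real.norm_of_nonneg (by have := hLnonneg t ht; positivity)]
  exact one_add_mul_rpow_mul_rpow_mul_le ha hε.le ht (hLnonneg t ht) (hLbound t ht)

lemma setIntegral_one_add_mul_rpow_mul_rpow_mul_le (ha : 1 ≤ a) (hLmeas : Measurable L)
    (hLnonneg : ∀ t, 0 < t → 0 ≤ L t) (hLbound : ∀ t, 0 < t → L t ≤ M)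
    (hLint : IntegrableOn (fun t => t ^ (-(a + 1)) * L t) (Ioi 0)) (hε : 0 < ε) :
    ∫ t in Ioi (0 : ℝ), (1 + t * ε) ^ (-(3 : ℝ) / 2) * t ^ (-a) * L t ≤
      (∫ t in Ioi (0 : ℝ), t ^ (-(a + 1)) * L t) + M * (Real.log (1 + ε) - Real.log ε) := by
  have hind := integrableOn_indicator_Ioi_one_inv_mul_one_add_mul hε
  rw [← integral_indicator_Ioi_one_inv_mul_one_add_mul hε, ← integral_const_mul,
    ← integral_add hLint (hind.const_mul M)]
  exact setIntegral_mono_on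
    (integrableOn_one_add_mul_rpow_mul_rpow_mul ha hLmeas hLnonneg hLbound hLint hε)
    (hLint.add (hind.const_mul M)) measurableSet_Ioi fun t ht =>
      one_add_mul_rpow_mul_rpow_mul_le ha hε.le ht (hLnonneg t ht) (hLbound t ht)

end Numerator

lemma add_mul_log_one_add_sq_sub_log_sq_le {I M τ : ℝ} (hI : 0 ≤ I) (hM : 0 ≤ M) (hτ0 : 0 < τ)
    (hτ : τ ≤ Real.exp (-1)) :
    I + M * (Real.log (1 + τ ^ 2) - Real.log (τ ^ 2)) ≤ (I + 3 * M) * Real.log (1 / τ) := by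
  have hlog : 1 ≤ Real.log (1 / τ) := by
    rw [one_div, Real.log_inv, le_neg, ← Real.log_exp (-1)]
    exact Real.log_le_log hτ0 hτ
  have hτ1 : τ ≤ 1 := hτ.trans (Real.exp_le_one_iff.mpr (by norm_num))
  have hlog_one_add : Real.log (1 + τ ^ 2) ≤ 1 :=
    (Real.log_le_sub_one_of_pos (by positivity)).trans (by nlinarith)
  have hlog_sq : Real.log (τ ^ 2) = -2 * Real.log (1 / τ) := by
    rw [Real.log_pow, one_div, Real.log_inv]
    push_cast
    ring
  rw [hlog_sq]
  nlinarith

theorem mA_le_of_le_setIntegral {a M : ℝ} {L : ℝ → ℝ} (ha : 1 ≤ a) (hLmeas : Measurable L)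
    (hLnonneg : ∀ t, 0 < t → 0 ≤ L t) (hLbound : ∀ t, 0 < t → L t ≤ M)
    (hLint : IntegrableOn (fun t => t ^ (-(a + 1)) * L t) (Ioi 0)) (x : ℝ) {τ c : ℝ}
    (hτ : 0 < τ) (hc : 0 < c)
    (hcJ : c ≤ ∫ t in Ioi (0 : ℝ), (1 + t * τ ^ 2) ^ (-(1 : ℝ) / 2) * (t ^ (-(a + 1)) * L t)) :
    mA a L x τ ≤ Real.exp (x ^ 2 / 2) * τ ^ 2 *
      ((∫ t in Ioi (0 : ℝ), t ^ (-(a + 1)) * L t) +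
        M * (Real.log (1 + τ ^ 2) - Real.log (τ ^ 2))) / c := by
  have hε : 0 < τ ^ 2 := by positivity
  have hnum := integrableOn_one_add_mul_rpow_mul_rpow_mul ha hLmeas hLnonneg hLbound hLint hε
  have hnum0 : ∀ t, 0 < t → 0 ≤ (1 + t * τ ^ 2) ^ (-(3 : ℝ) / 2) * t ^ (-a) * L t :=
    fun t ht => by have := hLnonneg t ht; positivity
  have hden := IntegrableOn.one_add_mul_rpow_mul hLint hε.le (p := -(1 : ℝ) / 2) (by norm_num)
  simp only [← mul_assoc] at hden hcJ
  calc mA a L x τ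
      ≤ τ ^ 2 * (Real.exp (x ^ 2 / 2) *
          ∫ t in Ioi (0 : ℝ), (1 + t * τ ^ 2) ^ (-(3 : ℝ) / 2) * t ^ (-a) * L t) / c := by
        refine div_le_div₀ (mul_nonneg hε.le (mul_nonneg (Real.exp_nonneg _)
          (setIntegral_nonneg measurableSet_Ioi hnum0))) ?_ hc ?_
        · exact mul_le_mul_of_nonneg_left
            (setIntegral_mul_likelihoodWeight_le hnum hnum0 hε.le) hε.le
        · exact hcJ.trans (setIntegral_le_setIntegral_mul_likelihoodWeight hden
            (fun t ht => by have := hLnonneg t ht; positivity) hε.le)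
    _ ≤ τ ^ 2 * (Real.exp (x ^ 2 / 2) * ((∫ t in Ioi (0 : ℝ), t ^ (-(a + 1)) * L t) +
          M * (Real.log (1 + τ ^ 2) - Real.log (τ ^ 2)))) / c := by
        gcongr
        exact setIntegral_one_add_mul_rpow_mul_rpow_mul_le ha hLmeas hLnonneg hLbound hLint hε
    _ = _ := by ring

/-- for `a ≥ 1`, uniformly in `x`, for small `τ`,
`m_a(x,τ) ≤ K₂ exp(x²/2) τ² log(1/τ)`. -/
theorem mA_upper_bound_a_ge_one
    (a : ℝ) (ha : 1 ≤ a)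
    (L : ℝ → ℝ) (hLmeas : Measurable L) (hLnonneg : ∀ t, 0 < t → 0 ≤ L t)
    (M : ℝ) (hLbound : ∀ t, 0 < t → L t ≤ M)
    (hLint : IntegrableOn (fun t => t ^ (-(a + 1)) * L t) (Set.Ioi 0))
    (hLpos : 0 < ∫ t in Set.Ioi (0:ℝ), t ^ (-(a + 1)) * L t) :
    ∃ K₂ ∈ Set.Ioi (0:ℝ), ∃ τ₀ ∈ Set.Ioo (0:ℝ) 1,
      ∀ τ ∈ Set.Ioo (0:ℝ) τ₀, ∀ x : ℝ,
        mA a L x τ ≤ K₂ * Real.exp (x ^ 2 / 2) * τ ^ 2 * Real.log (1 / τ) := by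
  set I := ∫ t in Ioi (0 : ℝ), t ^ (-(a + 1)) * L t
  have hM : 0 ≤ M := (hLnonneg 1 one_pos).trans (hLbound 1 one_pos)
  have hsq : Tendsto (fun τ : ℝ => τ ^ 2) (𝓝[>] 0) (𝓝[≥] 0) :=
    tendsto_nhdsWithin_iff.mpr ⟨((continuous_pow 2).tendsto' 0 0 (by simp)).mono_left
      nhdsWithin_le_nhds, Eventually.of_forall fun τ => sq_nonneg τ⟩
  have hJ := (tendsto_setIntegral_one_add_mul_rpow_mul hLint (p := -(1 : ℝ) / 2)
    (by norm_num)).comp hsq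
  obtain ⟨u, hu, hJu⟩ := mem_nhdsGT_iff_exists_Ioo_subset.mp
    (hJ.eventually (eventually_gt_nhds (half_lt_self hLpos)))
  refine ⟨(I + 3 * M) / (I / 2), div_pos (by linarith) (half_pos hLpos), min u (Real.exp (-1)),
    ⟨lt_min hu (Real.exp_pos _), (min_le_right _ _).trans_lt (by simp)⟩, fun τ ⟨hτ0, hτ⟩ x => ?_⟩
  calc mA a L x τ ≤ Real.exp (x ^ 2 / 2) * τ ^ 2 *
        (I + M * (Real.log (1 + τ ^ 2) - Real.log (τ ^ 2))) / (I / 2) :=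
        mA_le_of_le_setIntegral ha hLmeas hLnonneg hLbound hLint x hτ0 (half_pos hLpos)
          (hJu ⟨hτ0, hτ.trans_le (min_le_left _ _)⟩).le
    _ ≤ Real.exp (x ^ 2 / 2) * τ ^ 2 * ((I + 3 * M) * Real.log (1 / τ)) / (I / 2) := by
        gcongr
        exact add_mul_log_one_add_sq_sub_log_sq_le hLpos.le hM hτ0
          (hτ.le.trans (min_le_right _ _))
    _ = (I + 3 * M) / (I / 2) * Real.exp (x ^ 2 / 2) * τ ^ 2 * Real.log (1 / τ) := by ring
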